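/- arXiv:1811.07145 — 3 statements merged into one kernel-verified Lean document; each statement's English description precedes it below -/
import Mathlib

section
/- For a bimatrix game given by matrices Z₁, Z₂ ∈ ℝ^{l×m}, a pair of mixed strategies represented by stochastic vectors x ∈ ℝ^l, y ∈ ℝ^m is a Nash equilibrium if and only if there exist u, v ∈ ℝ such that xᵀ(𝟙u − Z₁y) = 0, yᵀ(𝟙v − Z₂ᵀx) = 0, 𝟙u − Z₁y ≥ 0, and 𝟙v − Z₂ᵀx ≥ 0. -/
lemma sum_rw1 {l m : ℕ} (M : Matrix (Fin l) (Fin m) ℝ) (a : Fin l → ℝ) (b : Fin m → ℝ) :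
    ∑ i, ∑ j, a i * M i j * b j = ∑ i, a i * M.mulVec b i := by
  refine Finset.sum_congr rfl fun i _ => ?_
  simp only [Matrix.mulVec, dotProduct, Finset.mul_sum]
  exact Finset.sum_congr rfl fun j _ => by ring

lemma sum_rw2 {l m : ℕ} (M : Matrix (Fin l) (Fin m) ℝ) (a : Fin l → ℝ) (b : Fin m → ℝ) :
    ∑ i, ∑ j, a i * M i j * b j = ∑ j, b j * M.transpose.mulVec a j := by
  rw [Finset.sum_comm]
  refine Finset.sum_congr rfl fun j _ => ?_
  simp only [Matrix.mulVec, dotProduct, Finset.mul_sum, Matrix.transpose_apply]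
  exact Finset.sum_congr rfl fun i _ => by ring

/-- LCP characterization of Nash equilibria in bimatrix games. -/
theorem stmt_1 (l m : ℕ)
    (Z1 Z2 : Matrix (Fin l) (Fin m) ℝ)
    (x : Fin l → ℝ) (y : Fin m → ℝ)
    (hx1 : ∀ i, 0 ≤ x i) (hx2 : ∑ i, x i = 1)
    (hy1 : ∀ j, 0 ≤ y j) (hy2 : ∑ j, y j = 1) :
    ((∀ x' : Fin l → ℝ, (∀ i, 0 ≤ x' i) → ∑ i, x' i = 1 →
        ∑ i, ∑ j, x' i * Z1 i j * y j ≤ ∑ i, ∑ j, x i * Z1 i j * y j) ∧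
     (∀ y' : Fin m → ℝ, (∀ j, 0 ≤ y' j) → ∑ j, y' j = 1 →
        ∑ i, ∑ j, x i * Z2 i j * y' j ≤ ∑ i, ∑ j, x i * Z2 i j * y j))
    ↔
    (∃ u v : ℝ,
      (∑ i, x i * (u - Z1.mulVec y i) = 0) ∧
      (∑ j, y j * (v - Z2.transpose.mulVec x j) = 0) ∧
      (∀ i, 0 ≤ u - Z1.mulVec y i) ∧
      (∀ j, 0 ≤ v - Z2.transpose.mulVec x j)) := by
  constructor
  · rintro ⟨h1, h2⟩
    refine ⟨∑ i, x i * Z1.mulVec y i, ∑ j, y j * Z2.transpose.mulVec x j, ?_, ?_, ?_, ?_⟩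
    · simp [mul_sub, Finset.sum_sub_distrib, ← Finset.sum_mul, hx2]
    · simp [mul_sub, Finset.sum_sub_distrib, ← Finset.sum_mul, hy2]
    · intro i
      have key := h1 (fun i' => if i' = i then 1 else 0) (by intro i'; positivity) (by simp)
      rw [sum_rw1, sum_rw1] at key
      simp only [ite_mul, one_mul, zero_mul, Finset.sum_ite_eq', Finset.mem_univ,
        if_true] at key
      linarith
    · intro j
      have key := h2 (fun j' => if j' = j then 1 else 0) (by intro j'; positivity) (by simp)
      rw [sum_rw2, sum_rw2] at key
      simp only [ite_mul, one_mul, zero_mul, Finset.sum_ite_eq', Finset.mem_univ,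
        if_true] at key
      linarith
  · rintro ⟨u, v, hu0, hv0, hu, hv⟩
    have hxu : ∑ i, x i * Z1.mulVec y i = u := by
      have h : ∑ i, x i * (u - Z1.mulVec y i) = u - ∑ i, x i * Z1.mulVec y i := by
        simp [mul_sub, Finset.sum_sub_distrib, ← Finset.sum_mul, hx2]
      rw [h] at hu0; linarith
    have hyv : ∑ j, y j * Z2.transpose.mulVec x j = v := by
      have h : ∑ j, y j * (v - Z2.transpose.mulVec x j) = v - ∑ j, y j * Z2.transpose.mulVec x j := by
        simp [mul_sub, Finset.sum_sub_distrib, ← Finset.sum_mul, hy2]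
      rw [h] at hv0; linarith
    constructor
    · intro x' hx'1 hx'2
      rw [sum_rw1, sum_rw1, hxu]
      calc ∑ i, x' i * Z1.mulVec y i ≤ ∑ i, x' i * u := by
            apply Finset.sum_le_sum; intro i _
            have := hu i
            nlinarith [hx'1 i]
        _ = u := by rw [← Finset.sum_mul, hx'2, one_mul]
    · intro y' hy'1 hy'2
      rw [sum_rw2, sum_rw2, hyv]
      calc ∑ j, y' j * Z2.transpose.mulVec x j ≤ ∑ j, y' j * v := by
            apply Finset.sum_le_sum; intro j _
            have := hv j
            nlinarith [hy'1 j]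
        _ = v := by rw [← Finset.sum_mul, hy'2, one_mul]
end

section
/- Consider the two-state oscillation system where the value vector at step n+1 in state s₁ is obtained as the best of (value at s₂ at step n for the 'continue' action) versus the fixed pair (1/4, 3/4) for the 'stop' action, choosing the action maximizing the sum, and symmetrically state s₂ chooses between the value at s₁ at step n and the fixed pair (3/4, 1/4). Starting from (0,0) in both states, the resulting sequence of value pairs at state s₁ does not converge: it oscillates between (1/4, 3/4) and (3/4, 1/4) for all n ≥ 1. -/
open Filter Topology

/-- the two-state value-iteration oscillation: starting from (0,0), with
each state choosing between continuing (taking the other state's previous value pair)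
and stopping (a fixed pair), by maximizing the coordinate sum (with the described
tie-breaking), the value pairs at state s₁ oscillate between (1/4, 3/4) and (3/4, 1/4)
and hence the sequence does not converge. -/
theorem stmt_10 (v1 v2 : ℕ → ℝ × ℝ)
    (h10 : v1 0 = (0, 0)) (h20 : v2 0 = (0, 0))
    (hr1 : ∀ n, v1 (n + 1) =
      if (v2 n).1 + (v2 n).2 > 1 then v2 n
      else if (v2 n).1 + (v2 n).2 = 1 then
        (if (v2 n).1 ≥ 1/4 then v2 n else (1/4, 3/4))
      else (1/4, 3/4))
    (hr2 : ∀ n, v2 (n + 1) =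
      if (v1 n).1 + (v1 n).2 > 1 then v1 n
      else if (v1 n).1 + (v1 n).2 = 1 then
        (if (v1 n).2 ≥ 1/4 then v1 n else (3/4, 1/4))
      else (3/4, 1/4)) :
    (∀ k : ℕ, v1 (2*k+1) = (1/4, 3/4) ∧ v1 (2*k+2) = (3/4, 1/4)) ∧
    ¬ ∃ L, Tendsto v1 atTop (𝓝 L) := by
  -- step lemmas
  have step1 : ∀ n, v2 n = ((1:ℝ)/4, (3:ℝ)/4) ∨ v2 n = ((3:ℝ)/4, (1:ℝ)/4) →
      v1 (n+1) = v2 n := by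
    rintro n (h | h) <;> rw [hr1 n, h] <;> norm_num
  have step2 : ∀ n, v1 n = ((1:ℝ)/4, (3:ℝ)/4) ∨ v1 n = ((3:ℝ)/4, (1:ℝ)/4) →
      v2 (n+1) = v1 n := by
    rintro n (h | h) <;> rw [hr2 n, h] <;> norm_num
  have h11 : v1 1 = ((1:ℝ)/4, (3:ℝ)/4) := by rw [hr1 0, h20]; norm_num
  have h21 : v2 1 = ((3:ℝ)/4, (1:ℝ)/4) := by rw [hr2 0, h10]; norm_num
  have main : ∀ k : ℕ, v1 (2*k+1) = ((1:ℝ)/4, (3:ℝ)/4) ∧ v2 (2*k+1) = ((3:ℝ)/4, (1:ℝ)/4) ∧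
      v1 (2*k+2) = ((3:ℝ)/4, (1:ℝ)/4) ∧ v2 (2*k+2) = ((1:ℝ)/4, (3:ℝ)/4) := by
    intro k
    induction k with
    | zero =>
      refine ⟨h11, h21, ?_, ?_⟩
      · rw [show (2*0+2 : ℕ) = 1 + 1 by ring, step1 1 (Or.inr h21)]; exact h21
      · rw [show (2*0+2 : ℕ) = 1 + 1 by ring, step2 1 (Or.inl h11)]; exact h11
    | succ k ih =>
      obtain ⟨_, _, h3, h4⟩ := ih
      have e1 : 2*(k+1)+1 = (2*k+2) + 1 := by ring
      have a1 : v1 (2*(k+1)+1) = ((1:ℝ)/4, (3:ℝ)/4) := by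
        rw [e1, step1 _ (Or.inl h4)]; exact h4
      have a2 : v2 (2*(k+1)+1) = ((3:ℝ)/4, (1:ℝ)/4) := by
        rw [e1, step2 _ (Or.inr h3)]; exact h3
      have e2 : 2*(k+1)+2 = (2*(k+1)+1) + 1 := rfl
      refine ⟨a1, a2, ?_, ?_⟩
      · rw [e2, step1 _ (Or.inr a2)]; exact a2
      · rw [e2, step2 _ (Or.inl a1)]; exact a1
  refine ⟨fun k => ⟨(main k).1, (main k).2.2.1⟩, ?_⟩
  rintro ⟨L, hL⟩
  have t1 : Tendsto (fun k => v1 (2*k+1)) atTop (𝓝 L) :=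
    hL.comp (tendsto_atTop_mono (fun k => by simp; omega) tendsto_id)
  have t2 : Tendsto (fun k => v1 (2*k+2)) atTop (𝓝 L) :=
    hL.comp (tendsto_atTop_mono (fun k => by simp; omega) tendsto_id)
  have e1 : L = ((1:ℝ)/4, (3:ℝ)/4) := by
    have : Tendsto (fun _ : ℕ => (((1:ℝ)/4, (3:ℝ)/4) : ℝ × ℝ)) atTop (𝓝 L) := by
      have := t1; simpa [fun k => (main k).1] using this
    exact (tendsto_nhds_unique tendsto_const_nhds this).symm
  have e2 : L = ((3:ℝ)/4, (1:ℝ)/4) := by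
    have : Tendsto (fun _ : ℕ => (((3:ℝ)/4, (1:ℝ)/4) : ℝ × ℝ)) atTop (𝓝 L) := by
      have := t2; simpa [fun k => (main k).2.2.1] using this
    exact (tendsto_nhds_unique tendsto_const_nhds this).symm
  rw [e1] at e2
  exact absurd (congrArg Prod.fst e2) (by norm_num)
end

section
/- For a Markov decision process with finite state space, nonnegative bounded step rewards, and target set T reached with probability 1 under every policy, the value iteration operator for maximal expected cumulative reward to reach T, applied from the zero vector, produces a monotonically non-decreasing sequence converging to the optimal expected reachability reward vector. -/
open Filter Topology

namespace Stmt14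

/-- A finite-state MDP with nonnegative rewards. -/
structure MDP (S : Type*) [Fintype S] where
  A : S → Type
  fin : ∀ s, Fintype (A s)
  nonemp : ∀ s, Nonempty (A s)
  δ : (s : S) → A s → S → ℝ
  δ_nonneg : ∀ s a s', 0 ≤ δ s a s'
  δ_sum : ∀ s a, haveI := fin s; ∑ s', δ s a s' = 1
  r : (s : S) → A s → ℝ
  r_nonneg : ∀ s a, 0 ≤ r s a

variable {S : Type*} [Fintype S] [DecidableEq S]

/-- A (randomized, history-dependent) policy: given the history of past states and the
current state, a distribution over actions. -/
def IsPolicy (M : MDP S) (π : List S → (s : S) → M.A s → ℝ) : Prop :=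
  ∀ h s, (∀ a, 0 ≤ π h s a) ∧ (haveI := M.fin s; ∑ a, π h s a = 1)

/-- Expected cumulative reward gathered within `n` steps before hitting `T`. -/
noncomputable def ER (M : MDP S) (T : Finset S) (π : List S → (s : S) → M.A s → ℝ) :
    ℕ → List S → S → ℝ
  | 0, _, _ => 0
  | n + 1, h, s =>
      if s ∈ T then 0
      else
        haveI := M.fin s
        ∑ a, π h s a * (M.r s a + ∑ s', M.δ s a s' * ER M T π n (h ++ [s]) s')

/-- Probability of reaching `T` within `n` steps under policy `π`. -/
noncomputable def PR (M : MDP S) (T : Finset S) (π : List S → (s : S) → M.A s → ℝ) :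
    ℕ → List S → S → ℝ
  | 0, _, s => if s ∈ T then 1 else 0
  | n + 1, h, s =>
      if s ∈ T then 1
      else
        haveI := M.fin s
        ∑ a, π h s a * ∑ s', M.δ s a s' * PR M T π n (h ++ [s]) s'

/-- Value iteration operator iterates, starting from the zero vector. -/
noncomputable def VI (M : MDP S) (T : Finset S) : ℕ → S → ℝ
  | 0, _ => 0
  | n + 1, s =>
      if s ∈ T then 0
      else
        haveI := M.fin s
        haveI := M.nonemp s
        Finset.univ.sup' Finset.univ_nonempty
          (fun a => M.r s a + ∑ s', M.δ s a s' * VI M T n s')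

/-- Optimal expected cumulative reward to reach `T`: supremum over policies of the
(monotone) limit of truncated expected rewards. -/
noncomputable def vstar (M : MDP S) (T : Finset S) (s : S) : ℝ :=
  ⨆ π : {p : List S → (s : S) → M.A s → ℝ // IsPolicy M p}, ⨆ n, ER M T π.1 n [] s

/-! ### auxiliary lemmas -/

variable (M : MDP S) (T : Finset S)

lemma VI_succ (n : ℕ) (s : S) : VI M T (n+1) s =
    if s ∈ T then 0
    else
      letI := M.fin s
      letI := M.nonemp s
      Finset.univ.sup' Finset.univ_nonempty
        (fun a => M.r s a + ∑ s', M.δ s a s' * VI M T n s') := rfl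

lemma VI_nonneg : ∀ n s, 0 ≤ VI M T n s := by
  intro n
  induction n with
  | zero => intro s; simp [VI]
  | succ n ih =>
    intro s
    rw [VI_succ]
    split
    · exact le_refl 0
    · obtain ⟨a⟩ := M.nonemp s
      refine le_trans ?_ (Finset.le_sup' _ (@Finset.mem_univ _ (M.fin s) a))
      have : 0 ≤ ∑ s', M.δ s a s' * VI M T n s' :=
        Finset.sum_nonneg fun s' _ => mul_nonneg (M.δ_nonneg s a s') (ih s')
      have := M.r_nonneg s a
      positivity

lemma VI_mem : ∀ n s, s ∈ T → VI M T n s = 0 := by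
  intro n s hs
  cases n with
  | zero => rfl
  | succ n => rw [VI_succ]; simp [hs]

lemma VI_mono (s : S) : Monotone fun n => VI M T n s := by
  have key : ∀ n s, VI M T n s ≤ VI M T (n+1) s := by
    intro n
    induction n with
    | zero => intro s; exact VI_nonneg M T 1 s
    | succ n ih =>
      intro s
      rw [VI_succ, VI_succ]
      split
      · exact le_refl 0
      · refine Finset.sup'_le _ _ fun a _ => ?_
        refine le_trans ?_ (Finset.le_sup' _ (@Finset.mem_univ _ (M.fin s) a))
        gcongr
        · exact M.δ_nonneg s a _
        · exact ih _
  exact monotone_nat_of_le_succ fun n => key n s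


/-- Minimal (over actions) reachability probability within `n` steps. -/
noncomputable def Q (M : MDP S) (T : Finset S) : ℕ → S → ℝ
  | 0, s => if s ∈ T then 1 else 0
  | n + 1, s =>
      if s ∈ T then 1
      else
        letI := M.fin s
        letI := M.nonemp s
        Finset.univ.inf' Finset.univ_nonempty
          (fun a => ∑ s', M.δ s a s' * Q M T n s')

lemma Q_succ (n : ℕ) (s : S) : Q M T (n+1) s =
    if s ∈ T then 1
    else
      letI := M.fin s
      letI := M.nonemp s
      Finset.univ.inf' Finset.univ_nonempty
        (fun a => ∑ s', M.δ s a s' * Q M T n s') := rfl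

lemma Q_nonneg : ∀ n s, 0 ≤ Q M T n s := by
  intro n
  induction n with
  | zero => intro s; simp only [Q]; split <;> norm_num
  | succ n ih =>
    intro s
    rw [Q_succ]
    split
    · norm_num
    · refine Finset.le_inf' _ _ fun a _ => ?_
      exact Finset.sum_nonneg fun s' _ => mul_nonneg (M.δ_nonneg s _ s') (ih s')

lemma Q_le_one : ∀ n s, Q M T n s ≤ 1 := by
  intro n
  induction n with
  | zero => intro s; simp only [Q]; split <;> norm_num
  | succ n ih =>
    intro s
    rw [Q_succ]
    split
    · norm_num
    · obtain ⟨a⟩ := M.nonemp s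
      refine le_trans (Finset.inf'_le _ (@Finset.mem_univ _ (M.fin s) a)) ?_
      calc (haveI := M.fin s; ∑ s', M.δ s a s' * Q M T n s')
          ≤ ∑ s', M.δ s a s' * 1 := by
            refine Finset.sum_le_sum fun s' _ => ?_
            exact mul_le_mul_of_nonneg_left (ih s') (M.δ_nonneg s _ s')
        _ = 1 := by simp [M.δ_sum s a]

lemma Q_mono (s : S) : Monotone fun n => Q M T n s := by
  have key : ∀ n s, Q M T n s ≤ Q M T (n+1) s := by
    intro n
    induction n with
    | zero =>
      intro s
      rw [Q_succ]
      simp only [Q]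
      split
      · exact le_refl 1
      · refine Finset.le_inf' _ _ fun a _ => ?_
        exact Finset.sum_nonneg fun s' _ =>
          mul_nonneg (M.δ_nonneg s a s') (Q_nonneg M T 0 s')
    | succ n ih =>
      intro s
      rw [Q_succ, Q_succ]
      split
      · exact le_refl 1
      · refine Finset.le_inf' _ _ fun a ha => ?_
        refine le_trans (Finset.inf'_le _ ha) ?_
        refine Finset.sum_le_sum fun s' _ => ?_
        exact mul_le_mul_of_nonneg_left (ih s') (M.δ_nonneg s a s')
  exact monotone_nat_of_le_succ fun n => key n s

lemma Q_mem (n : ℕ) (s : S) (hs : s ∈ T) : Q M T n s = 1 := by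
  cases n with
  | zero => simp [Q, hs]
  | succ n => rw [Q_succ]; simp [hs]


lemma ER_succ (π) (n : ℕ) (h : List S) (s : S) : ER M T π (n+1) h s =
    if s ∈ T then 0
    else
      letI := M.fin s
      ∑ a, π h s a * (M.r s a + ∑ s', M.δ s a s' * ER M T π n (h ++ [s]) s') := rfl

lemma PR_succ (π) (n : ℕ) (h : List S) (s : S) : PR M T π (n+1) h s =
    if s ∈ T then 1
    else
      letI := M.fin s
      ∑ a, π h s a * ∑ s', M.δ s a s' * PR M T π n (h ++ [s]) s' := rfl

lemma ER_le_VI (π) (hπ : IsPolicy M π) : ∀ n h s, ER M T π n h s ≤ VI M T n s := by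
  intro n
  induction n with
  | zero => intro h s; simp [ER, VI]
  | succ n ih =>
    intro h s
    rw [ER_succ, VI_succ]
    split
    · exact le_refl 0
    · letI := M.fin s
      letI := M.nonemp s
      calc ∑ a, π h s a * (M.r s a + ∑ s', M.δ s a s' * ER M T π n (h ++ [s]) s')
          ≤ ∑ a, π h s a * (Finset.univ.sup' Finset.univ_nonempty
              (fun a => M.r s a + ∑ s', M.δ s a s' * VI M T n s')) := by
            refine Finset.sum_le_sum fun a _ => ?_
            refine mul_le_mul_of_nonneg_left ?_ ((hπ h s).1 a)
            refine le_trans ?_ (Finset.le_sup' _ (Finset.mem_univ a))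
            gcongr with s' hs'
            · exact M.δ_nonneg s a s'
            · exact ih (h ++ [s]) s'
        _ = _ := by rw [← Finset.sum_mul, (hπ h s).2, one_mul]

lemma Q_le_PR (π) (hπ : IsPolicy M π) : ∀ n h s, Q M T n s ≤ PR M T π n h s := by
  intro n
  induction n with
  | zero => intro h s; simp [Q, PR]
  | succ n ih =>
    intro h s
    rw [Q_succ, PR_succ]
    split
    · exact le_refl 1
    · letI := M.fin s
      letI := M.nonemp s
      calc Finset.univ.inf' Finset.univ_nonempty
              (fun a => ∑ s', M.δ s a s' * Q M T n s')
          = ∑ a, π h s a * (Finset.univ.inf' Finset.univ_nonempty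
              (fun a => ∑ s', M.δ s a s' * Q M T n s')) := by
            rw [← Finset.sum_mul, (hπ h s).2, one_mul]
        _ ≤ ∑ a, π h s a * ∑ s', M.δ s a s' * PR M T π n (h ++ [s]) s' := by
            refine Finset.sum_le_sum fun a _ => ?_
            refine mul_le_mul_of_nonneg_left ?_ ((hπ h s).1 a)
            refine le_trans (Finset.inf'_le _ (Finset.mem_univ a)) ?_
            gcongr with s' hs'
            · exact M.δ_nonneg s a s'
            · exact ih (h ++ [s]) s'


/-- An action attaining the maximum in value iteration. -/
noncomputable def opt (n : ℕ) (s : S) : M.A s :=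
  letI := M.fin s
  letI := M.nonemp s
  (Finset.exists_mem_eq_sup' Finset.univ_nonempty
    (fun a => M.r s a + ∑ s', M.δ s a s' * VI M T n s')).choose

lemma opt_spec (n : ℕ) (s : S) :
    (letI := M.fin s; letI := M.nonemp s;
     Finset.univ.sup' Finset.univ_nonempty
       (fun a => M.r s a + ∑ s', M.δ s a s' * VI M T n s'))
     = M.r s (opt M T n s) +
        (letI := M.fin s; ∑ s', M.δ s (opt M T n s) s' * VI M T n s') :=
  letI := M.fin s
  letI := M.nonemp s
  (Finset.exists_mem_eq_sup' Finset.univ_nonempty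
    (fun a => M.r s a + ∑ s', M.δ s a s' * VI M T n s')).choose_spec.2

open Classical in
/-- The (deterministic, step-dependent) policy optimal for horizon `n`. -/
noncomputable def piopt (n : ℕ) : List S → (s : S) → M.A s → ℝ :=
  fun h s a => if a = opt M T (n - 1 - h.length) s then 1 else 0

lemma piopt_isPolicy (n : ℕ) : IsPolicy M (piopt M T n) := by
  intro h s
  letI := M.fin s
  constructor
  · intro a
    unfold piopt
    split <;> norm_num
  · classical
    simp [piopt, Finset.sum_ite_eq']

lemma VI_le_ER_opt (n : ℕ) : ∀ k h s, h.length + k = n →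
    VI M T k s ≤ ER M T (piopt M T n) k h s := by
  intro k
  induction k with
  | zero => intro h s _; simp [ER, VI]
  | succ k ih =>
    intro h s hlen
    rw [ER_succ, VI_succ]
    split
    · exact le_refl 0
    · letI := M.fin s
      letI := M.nonemp s
      have hidx : n - 1 - h.length = k := by omega
      have hsum : (∑ a, piopt M T n h s a *
            (M.r s a + ∑ s', M.δ s a s' * ER M T (piopt M T n) k (h ++ [s]) s'))
          = M.r s (opt M T k s) +
            ∑ s', M.δ s (opt M T k s) s' * ER M T (piopt M T n) k (h ++ [s]) s' := by
        classical
        simp [piopt, hidx, ite_mul, one_mul, zero_mul, Finset.sum_ite_eq']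
      rw [hsum, opt_spec]
      gcongr with s' hs'
      · exact M.δ_nonneg s _ s'
      · exact ih (h ++ [s]) s' (by simpa using by omega)


lemma exists_Q_pos
    (hreach : ∀ π, IsPolicy M π → ∀ s : S, (⨆ n, PR M T π n [] s) = 1) :
    ∃ N, ∀ s, 0 < Q M T N s := by
  classical
  by_contra hcon
  push_neg at hcon
  choose f hf using hcon
  obtain ⟨s₀, hs₀⟩ := Finite.exists_infinite_fiber f
  rw [Set.infinite_coe_iff] at hs₀
  set B : Set S := {s | ∀ n, Q M T n s = 0} with hB
  have hzero : ∀ s, (∃ m, Q M T m s = 0 ∧ ∀ n, n ≤ m → True) → True := fun _ _ => trivial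
  have hQ0 : s₀ ∈ B := by
    intro n
    obtain ⟨m, hm, hnm⟩ := hs₀.exists_gt n
    have hfm : f m = s₀ := hm
    have hzm : Q M T m s₀ = 0 := le_antisymm (hfm ▸ hf m) (Q_nonneg M T m s₀)
    exact le_antisymm (le_trans (Q_mono M T s₀ hnm.le) hzm.le) (Q_nonneg M T n s₀)
  have hBT : ∀ s ∈ B, s ∉ T := by
    intro s hs hsT
    have := hs 0
    rw [Q_mem M T 0 s hsT] at this
    norm_num at this
  have htrap : ∀ s, s ∈ B → ∃ a : M.A s, ∀ s', M.δ s a s' ≠ 0 → s' ∈ B := by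
    intro s hs
    letI := M.fin s
    letI := M.nonemp s
    have hact : ∀ n, ∃ a : M.A s, (∑ s', M.δ s a s' * Q M T n s') = 0 := by
      intro n
      obtain ⟨a, _, ha⟩ := Finset.exists_mem_eq_inf' (Finset.univ_nonempty)
        (fun a => ∑ s', M.δ s a s' * Q M T n s')
      refine ⟨a, ?_⟩
      have h1 := hs (n+1)
      rw [Q_succ, if_neg (hBT s hs)] at h1
      rw [← ha]
      exact h1
    choose g hg using hact
    obtain ⟨a, hafib⟩ := Finite.exists_infinite_fiber g
    rw [Set.infinite_coe_iff] at hafib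
    refine ⟨a, fun s' hδ => ?_⟩
    intro n
    obtain ⟨m, hm, hnm⟩ := hafib.exists_gt n
    have hgm : g m = a := hm
    have hsum0 : (∑ t, M.δ s a t * Q M T m t) = 0 := hgm ▸ hg m
    have hterm : M.δ s a s' * Q M T m s' = 0 :=
      (Finset.sum_eq_zero_iff_of_nonneg (fun t _ =>
        mul_nonneg (M.δ_nonneg s a t) (Q_nonneg M T m t))).mp hsum0 s' (Finset.mem_univ s')
    have hQm : Q M T m s' = 0 := by
      rcases mul_eq_zero.mp hterm with h | h
      · exact absurd h hδ
      · exact h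
    exact le_antisymm (le_trans (Q_mono M T s' hnm.le) hQm.le) (Q_nonneg M T n s')
  choose act hact using htrap
  let act' : (s : S) → M.A s := fun s =>
    if hs : s ∈ B then act s hs else Classical.choice (M.nonemp s)
  let π : List S → (s : S) → M.A s → ℝ := fun _ s a => if a = act' s then 1 else 0
  have hπ : IsPolicy M π := by
    intro h s
    letI := M.fin s
    constructor
    · intro a
      simp only [π]
      split <;> norm_num
    · simp [π, Finset.sum_ite_eq']
  have hPR0 : ∀ n h s, s ∈ B → PR M T π n h s = 0 := by
    intro n
    induction n with
    | zero => intro h s hs; simp [PR, hBT s hs]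
    | succ n ih =>
      intro h s hs
      rw [PR_succ, if_neg (hBT s hs)]
      letI := M.fin s
      have hred : (∑ a, π h s a * ∑ s', M.δ s a s' * PR M T π n (h ++ [s]) s')
          = ∑ s', M.δ s (act' s) s' * PR M T π n (h ++ [s]) s' := by
        simp [π, ite_mul, one_mul, zero_mul, Finset.sum_ite_eq']
      rw [hred]
      refine Finset.sum_eq_zero fun s' _ => ?_
      by_cases hδ : M.δ s (act' s) s' = 0
      · rw [hδ, zero_mul]
      · have he : act' s = act s hs := dif_pos hs
        rw [he] at hδ
        have hs' : s' ∈ B := hact s hs s' hδ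
        rw [ih _ s' hs', mul_zero]
  have hsup : (⨆ n, PR M T π n [] s₀) = 0 := by
    have : (fun n => PR M T π n [] s₀) = fun _ => (0 : ℝ) := by
      funext n; exact hPR0 n [] s₀ hQ0
    rw [this]
    exact ciSup_const
  have := hreach π hπ s₀
  rw [hsup] at this
  norm_num at this


lemma VI_key (R : ℝ) (hR0 : 0 ≤ R) (hR : ∀ s a, M.r s a ≤ R) (n : ℕ) (W : ℝ)
    (hW0 : 0 ≤ W) (hW : ∀ s, VI M T n s ≤ W) :
    ∀ k s, VI M T (k + n) s ≤ k * R + (1 - Q M T k s) * W := by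
  intro k
  induction k with
  | zero =>
    intro s
    rw [Nat.zero_add]
    by_cases hs : s ∈ T
    · rw [VI_mem M T n s hs]
      simp [Q, hs]
    · simpa [Q, hs] using hW s
  | succ k ih =>
    intro s
    have hcast : ((k : ℝ) + 1) = ((k + 1 : ℕ) : ℝ) := by push_cast; ring
    rw [show k + 1 + n = (k + n) + 1 by omega, VI_succ]
    by_cases hs : s ∈ T
    · rw [if_pos hs, Q_mem M T (k+1) s hs]
      have : (0:ℝ) ≤ (k+1 : ℕ) * R := by positivity
      simpa using this
    · rw [if_neg hs, Q_succ, if_neg hs]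
      letI := M.fin s
      letI := M.nonemp s
      refine Finset.sup'_le _ _ fun a _ => ?_
      have hsum : (∑ s', M.δ s a s' * ((k:ℝ) * R + (1 - Q M T k s') * W))
          = (k:ℝ) * R + (1 - ∑ s', M.δ s a s' * Q M T k s') * W := by
        have h1 : ∀ s', M.δ s a s' * ((k:ℝ) * R + (1 - Q M T k s') * W)
            = ((k:ℝ) * R + W) * M.δ s a s' - W * (M.δ s a s' * Q M T k s') := by
          intro s'; ring
        rw [Finset.sum_congr rfl fun s' _ => h1 s', Finset.sum_sub_distrib,
          ← Finset.mul_sum, ← Finset.mul_sum, M.δ_sum s a]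
        ring
      have step1 : M.r s a + ∑ s', M.δ s a s' * VI M T (k + n) s'
          ≤ R + ((k:ℝ) * R + (1 - ∑ s', M.δ s a s' * Q M T k s') * W) := by
        rw [← hsum]
        gcongr with s' hs'
        · exact hR s a
        · exact M.δ_nonneg s a s'
        · exact ih s'
      have hinf : (Finset.univ.inf' Finset.univ_nonempty
            (fun a => ∑ s', M.δ s a s' * Q M T k s'))
          ≤ ∑ s', M.δ s a s' * Q M T k s' := Finset.inf'_le _ (Finset.mem_univ a)
      have step2 : (1 - ∑ s', M.δ s a s' * Q M T k s') * W
          ≤ (1 - Finset.univ.inf' Finset.univ_nonempty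
              (fun a => ∑ s', M.δ s a s' * Q M T k s')) * W := by
        apply mul_le_mul_of_nonneg_right _ hW0
        linarith
      calc M.r s a + ∑ s', M.δ s a s' * VI M T (k + n) s'
          ≤ R + ((k:ℝ) * R + (1 - ∑ s', M.δ s a s' * Q M T k s') * W) := step1
        _ ≤ R + ((k:ℝ) * R + (1 - Finset.univ.inf' Finset.univ_nonempty
              (fun a => ∑ s', M.δ s a s' * Q M T k s')) * W) := by linarith
        _ = ((k+1 : ℕ) : ℝ) * R + (1 - Finset.univ.inf' Finset.univ_nonempty
              (fun a => ∑ s', M.δ s a s' * Q M T k s')) * W := by push_cast; ring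

lemma VI_bound [Nonempty S]
    (hreach : ∀ π, IsPolicy M π → ∀ s : S, (⨆ n, PR M T π n [] s) = 1) :
    ∃ C : ℝ, 0 ≤ C ∧ ∀ n s, VI M T n s ≤ C := by
  classical
  obtain ⟨N₀, hN₀⟩ := exists_Q_pos M T hreach
  set N := N₀ + 1 with hNdef
  have hNpos : 0 < N := Nat.succ_pos _
  have hN : ∀ s, 0 < Q M T N s :=
    fun s => lt_of_lt_of_le (hN₀ s) (Q_mono M T s (Nat.le_succ _))
  set p := Finset.univ.inf' Finset.univ_nonempty (fun s => Q M T N s) with hpdef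
  have hp_le : ∀ s, p ≤ Q M T N s := fun s => Finset.inf'_le _ (Finset.mem_univ s)
  have hp_pos : 0 < p := by
    obtain ⟨s₁, _, hs₁⟩ := Finset.exists_mem_eq_inf' Finset.univ_nonempty
      (fun s => Q M T N s)
    rw [hpdef, hs₁]
    exact hN s₁
  have hp1 : p ≤ 1 :=
    le_trans (hp_le (Classical.arbitrary S)) (Q_le_one M T N _)
  obtain ⟨R, hR0, hR⟩ : ∃ R : ℝ, 0 ≤ R ∧ ∀ s a, M.r s a ≤ R := by
    refine ⟨Finset.univ.sup' Finset.univ_nonempty (fun s =>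
      letI := M.fin s; letI := M.nonemp s;
      Finset.univ.sup' Finset.univ_nonempty (fun a => M.r s a)), ?_, ?_⟩
    · obtain s := Classical.arbitrary S
      letI := M.fin s
      letI := M.nonemp s
      refine le_trans ?_ (Finset.le_sup' _ (Finset.mem_univ s))
      refine le_trans (M.r_nonneg s (Classical.arbitrary _))
        (Finset.le_sup' _ (Finset.mem_univ _))
    · intro s a
      letI := M.fin s
      letI := M.nonemp s
      exact le_trans (Finset.le_sup' _ (Finset.mem_univ a))
        (Finset.le_sup' (fun s => letI := M.fin s; letI := M.nonemp s;
          Finset.univ.sup' Finset.univ_nonempty (fun a => M.r s a))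
          (Finset.mem_univ s))
  set C := ((N : ℝ) * R) / p with hCdef
  have hC0 : 0 ≤ C := div_nonneg (mul_nonneg (Nat.cast_nonneg N) hR0) hp_pos.le
  have hpC : p * C = (N : ℝ) * R := by
    rw [hCdef]; field_simp
  set W : ℕ → ℝ := fun n =>
    Finset.univ.sup' Finset.univ_nonempty (fun s => VI M T n s) with hWdef
  have hWle : ∀ n s, VI M T n s ≤ W n :=
    fun n s => Finset.le_sup' _ (Finset.mem_univ s)
  have hW0 : ∀ n, 0 ≤ W n := fun n =>
    le_trans (VI_nonneg M T n (Classical.arbitrary S)) (hWle n _)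
  have hWmono : Monotone W := fun m n hmn =>
    Finset.sup'_le _ _ fun s _ => le_trans (VI_mono M T s hmn)
      (Finset.le_sup' _ (Finset.mem_univ s))
  have hstep : ∀ n, W (N + n) ≤ (N : ℝ) * R + (1 - p) * W n := by
    intro n
    refine Finset.sup'_le _ _ fun s _ => ?_
    calc VI M T (N + n) s ≤ (N : ℝ) * R + (1 - Q M T N s) * W n :=
          VI_key M T R hR0 hR n (W n) (hW0 n) (fun s' => hWle n s') N s
      _ ≤ (N : ℝ) * R + (1 - p) * W n := by
          have := hp_le s
          have := hW0 n
          nlinarith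
  have hmain : ∀ m, W (m * N) ≤ C := by
    intro m
    induction m with
    | zero =>
      refine le_trans (Finset.sup'_le _ _ fun s _ => ?_) hC0
      simp [VI]
    | succ m ih =>
      rw [show (m + 1) * N = N + m * N by ring]
      calc W (N + m * N) ≤ (N : ℝ) * R + (1 - p) * W (m * N) := hstep _
        _ ≤ (N : ℝ) * R + (1 - p) * C := by nlinarith [hW0 (m * N)]
        _ = C := by linarith [hpC]
  refine ⟨C, hC0, fun n s => ?_⟩
  refine le_trans (hWle n s) (le_trans (hWmono ?_) (hmain n))
  calc n = n * 1 := (mul_one n).symm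
    _ ≤ n * N := Nat.mul_le_mul_left n hNpos


/-- for an MDP with finite state space, nonnegative rewards and target T
reached with probability 1 under every policy, value iteration from 0 is pointwise
monotonically non-decreasing and converges to the optimal expected reachability
reward. -/
theorem stmt_14 (M : MDP S) (T : Finset S)
    (hreach : ∀ π, IsPolicy M π → ∀ s : S, (⨆ n, PR M T π n [] s) = 1) :
    (∀ s : S, Monotone fun n => VI M T n s) ∧
    (∀ s : S, Tendsto (fun n => VI M T n s) atTop (𝓝 (vstar M T s))) := by
  refine ⟨VI_mono M T, fun s => ?_⟩
  haveI : Nonempty S := ⟨s⟩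
  haveI : Nonempty {p : List S → (s : S) → M.A s → ℝ // IsPolicy M p} :=
    ⟨⟨piopt M T 0, piopt_isPolicy M T 0⟩⟩
  obtain ⟨C, hC0, hC⟩ := VI_bound M T hreach
  have hbdd : BddAbove (Set.range fun n => VI M T n s) := by
    refine ⟨C, ?_⟩
    rintro x ⟨n, rfl⟩
    exact hC n s
  have hveq : vstar M T s = ⨆ n, VI M T n s := by
    apply le_antisymm
    · refine ciSup_le fun π => ?_
      refine ciSup_le fun n => ?_
      exact le_trans (ER_le_VI M T π.1 π.2 n [] s) (le_ciSup hbdd n)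
    · refine ciSup_le fun n => ?_
      have h1 : VI M T n s ≤ ER M T (piopt M T n) n [] s :=
        VI_le_ER_opt M T n n [] s (by simp)
      have hbddER : BddAbove (Set.range fun m => ER M T (piopt M T n) m [] s) := by
        refine ⟨C, ?_⟩
        rintro x ⟨m, rfl⟩
        exact le_trans (ER_le_VI M T _ (piopt_isPolicy M T n) m [] s) (hC m s)
      have h2 : ER M T (piopt M T n) n [] s
          ≤ ⨆ m, ER M T (piopt M T n) m [] s := le_ciSup hbddER n
      have h3 : (⨆ m, ER M T (piopt M T n) m [] s) ≤ vstar M T s := by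
        refine le_ciSup (f := fun π : {p : List S → (s : S) → M.A s → ℝ // IsPolicy M p} =>
          ⨆ m, ER M T π.1 m [] s) ?_ ⟨piopt M T n, piopt_isPolicy M T n⟩
        refine ⟨C, ?_⟩
        rintro x ⟨π, rfl⟩
        exact ciSup_le fun m => le_trans (ER_le_VI M T π.1 π.2 m [] s) (hC m s)
      linarith
  rw [hveq]
  exact tendsto_atTop_ciSup (VI_mono M T s) hbdd

end Stmt14
end
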